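/- arXiv:0907.1857 — 5 statements merged into one kernel-verified Lean document; each statement's English description precedes it below -/
import Mathlib

section
/- Let u : U → R^n be a smooth map on an open set U ⊂ R^n satisfying (∇u)^T ∇u = g for a smooth metric g. Then for every m, the second covariant derivative (with respect to g) of the component function u^m vanishes identically: ∂²_{ij} u^m − Γ^k_{ij} ∂_k u^m = 0 for all i, j. -/
open Matrix

/-- Partial derivative `∂_i f(x)` of a scalar function on `ℝⁿ`. -/
noncomputable def pd {n : ℕ} (i : Fin n) (f : (Fin n → ℝ) → ℝ) (x : Fin n → ℝ) : ℝ :=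
  fderiv ℝ f x (Pi.single i 1)

/-- The gradient matrix of a map `u : ℝⁿ → ℝⁿ`: `(grad u x)_{ij} = ∂_j u^i (x)`. -/
noncomputable def grad {n : ℕ} (u : (Fin n → ℝ) → (Fin n → ℝ)) (x : Fin n → ℝ) :
    Matrix (Fin n) (Fin n) ℝ :=
  Matrix.of fun i j => fderiv ℝ u x (Pi.single j 1) i

/-- The Christoffel symbols `Γ^m_{ij} = (1/2) g^{km} (∂_i g_{kj} + ∂_j g_{ik} - ∂_k g_{ij})`
of a metric `g` on `ℝⁿ` (summation over `k`; `g⁻¹ = [g^{ij}]`). -/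
noncomputable def christoffel {n : ℕ} (g : (Fin n → ℝ) → Matrix (Fin n) (Fin n) ℝ)
    (m i j : Fin n) (x : Fin n → ℝ) : ℝ :=
  (1 / 2) * ∑ k, (g x)⁻¹ k m *
    (pd i (fun y => g y k j) x + pd j (fun y => g y i k) x - pd k (fun y => g y i j) x)

/-- if `u : U → ℝⁿ` is smooth with `(∇u)ᵀ ∇u = g` on the open set `U`, then the
second covariant derivative of each component vanishes:
`∂²_{ij} u^m - Γ^k_{ij} ∂_k u^m = 0` on `U`. -/
theorem second_covariant_derivative_vanishes
    (n : ℕ) (U : Set (Fin n → ℝ)) (hU : IsOpen U)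
    (g : (Fin n → ℝ) → Matrix (Fin n) (Fin n) ℝ)
    (hg_smooth : ∀ i j, ContDiff ℝ (⊤ : ℕ∞) (fun x => g x i j))
    (hg_symm : ∀ x ∈ U, (g x).IsSymm) (hg_pos : ∀ x ∈ U, (g x).PosDef)
    (u : (Fin n → ℝ) → (Fin n → ℝ)) (hu : ContDiff ℝ (⊤ : ℕ∞) u)
    (hiso : ∀ x ∈ U, (grad u x)ᵀ * grad u x = g x) :
    ∀ x ∈ U, ∀ m i j : Fin n,
      pd i (fun y => pd j (fun z => u z m) y) x
        - ∑ k, christoffel g k i j x * pd k (fun z => u z m) x = 0 := by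
  intro x hx m i j
  classical
  have hup : ∀ p, ContDiff ℝ (⊤ : ℕ∞) (fun z => u z p) := fun p => contDiff_pi.mp hu p
  -- coordinate formula for first partials
  have hcoord : ∀ (p s : Fin n) (y : Fin n → ℝ),
      pd s (fun z => u z p) y = fderiv ℝ u y (Pi.single s 1) p := by
    intro p s y
    have h1 : HasFDerivAt u (fderiv ℝ u y) y := (hu.differentiable (by simp) y).hasFDerivAt
    have h2 : HasFDerivAt (fun z => u z p)
        ((ContinuousLinearMap.proj p).comp (fderiv ℝ u y)) y :=
      (ContinuousLinearMap.proj (R := ℝ) (φ := fun _ : Fin n => ℝ) p).hasFDerivAt.comp y h1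
    simp [pd, h2.fderiv]
  -- smoothness of first partials
  have hpd : ∀ (p t : Fin n), ContDiff ℝ (⊤ : ℕ∞) (fun y => pd t (fun z => u z p) y) := by
    intro p t
    have h1 : ContDiff ℝ (⊤ : ℕ∞) (fderiv ℝ (fun z => u z p)) := (hup p).fderiv_right (by simp)
    exact h1.clm_apply contDiff_const
  -- abbreviations
  set A : Fin n → Fin n → ℝ := fun p s => pd s (fun z => u z p) x with hAdef
  set S : Fin n → Fin n → Fin n → ℝ :=
    fun p s t => pd s (fun y => pd t (fun z => u z p) y) x with hSdef
  -- second derivative formula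
  have hSnd : ∀ p s t, S p s t
      = fderiv ℝ (fderiv ℝ (fun z => u z p)) x (Pi.single s 1) (Pi.single t 1) := by
    intro p s t
    have hc : DifferentiableAt ℝ (fderiv ℝ (fun z => u z p)) x :=
      (((hup p).fderiv_right (m := 1) (WithTop.coe_le_coe.mpr le_top)).differentiable (by simp)) x
    simp only [hSdef, pd]
    rw [fderiv_clm_apply hc (differentiableAt_const _)]
    simp
  have hSsymm : ∀ p s t, S p s t = S p t s := by
    intro p s t
    rw [hSnd, hSnd]
    exact ((hup p).contDiffAt.isSymmSndFDerivAt (by rw [minSmoothness_of_isRCLikeNormedField]; exact WithTop.coe_le_coe.mpr le_top)).eq _ _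
  -- Gram identity on U
  have hGram : ∀ y ∈ U, ∀ a b : Fin n, g y a b =
      ∑ p, pd a (fun z => u z p) y * pd b (fun z => u z p) y := by
    intro y hy a b
    have h2 : ((grad u y)ᵀ * grad u y) a b = g y a b := by rw [hiso y hy]
    rw [← h2]
    simp only [Matrix.mul_apply, Matrix.transpose_apply, grad, Matrix.of_apply]
    exact Finset.sum_congr rfl fun p _ => by rw [hcoord, hcoord]
  -- derivative of metric entries
  have hD : ∀ s a b : Fin n, pd s (fun y => g y a b) x =
      ∑ p, (S p s a * A p b + A p a * S p s b) := by
    intro s a b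
    have heq : (fun y => g y a b) =ᶠ[nhds x]
        (fun y => ∑ p, pd a (fun z => u z p) y * pd b (fun z => u z p) y) :=
      Filter.eventuallyEq_of_mem (hU.mem_nhds hx) (fun y hy => hGram y hy a b)
    have hprod : ∀ p : Fin n, HasFDerivAt
        (fun y => pd a (fun z => u z p) y * pd b (fun z => u z p) y)
        (pd a (fun z => u z p) x • fderiv ℝ (fun y => pd b (fun z => u z p) y) x
          + pd b (fun z => u z p) x • fderiv ℝ (fun y => pd a (fun z => u z p) y) x) x :=
      fun p => (((hpd p a).differentiable (by simp) x).hasFDerivAt).mul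
        (((hpd p b).differentiable (by simp) x).hasFDerivAt)
    have hsum := HasFDerivAt.fun_sum (fun p (_ : p ∈ Finset.univ) => hprod p)
    have hfd : pd s (fun y => g y a b) x
        = (∑ p, (pd a (fun z => u z p) x • fderiv ℝ (fun y => pd b (fun z => u z p) y) x
          + pd b (fun z => u z p) x • fderiv ℝ (fun y => pd a (fun z => u z p) y) x))
            (Pi.single s 1) := by
      show fderiv ℝ (fun y => g y a b) x (Pi.single s 1) = _
      rw [heq.fderiv_eq, hsum.fderiv]
    rw [hfd]
    simp only [ContinuousLinearMap.coe_sum', Finset.sum_apply, ContinuousLinearMap.add_apply,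
      ContinuousLinearMap.coe_smul', Pi.smul_apply, smul_eq_mul]
    refine Finset.sum_congr rfl fun p _ => ?_
    simp only [hAdef, hSdef, pd]
    ring
  -- invertibility of g x and grad u x
  have hdet : IsUnit (g x).det := isUnit_iff_ne_zero.mpr (hg_pos x hx).det_pos.ne'
  have hginv : (g x)⁻¹ * g x = 1 := Matrix.nonsing_inv_mul _ hdet
  have hJdet : IsUnit (grad u x).det := by
    have h1 : (grad u x).det * (grad u x).det ≠ 0 := by
      have h0 := (hg_pos x hx).det_pos.ne'
      rw [← hiso x hx, Matrix.det_mul, Matrix.det_transpose] at h0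
      exact h0
    exact isUnit_iff_ne_zero.mpr fun h => h1 (by rw [h, mul_zero])
  -- the key orthogonality computation
  have key : ∀ s : Fin n,
      ∑ p, A p s * (S p i j - ∑ k, christoffel g k i j x * A p k) = 0 := by
    intro s
    have hGxs : ∀ k, g x k s = ∑ p, A p k * A p s := fun k => hGram x hx k s
    have hGamma : ∑ k, christoffel g k i j x * g x k s
        = (1/2) * (pd i (fun y => g y s j) x + pd j (fun y => g y i s) x
            - pd s (fun y => g y i j) x) := by
      simp only [christoffel]
      have step1 : ∀ k : Fin n,
          ((1/2 : ℝ) * ∑ l, (g x)⁻¹ l k *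
            (pd i (fun y => g y l j) x + pd j (fun y => g y i l) x
              - pd l (fun y => g y i j) x)) * g x k s
          = ∑ l, (1/2 : ℝ) * (pd i (fun y => g y l j) x + pd j (fun y => g y i l) x
              - pd l (fun y => g y i j) x) * ((g x)⁻¹ l k * g x k s) := by
        intro k
        rw [Finset.mul_sum, Finset.sum_mul]
        exact Finset.sum_congr rfl fun l _ => by ring
      calc ∑ k, ((1/2 : ℝ) * ∑ l, (g x)⁻¹ l k *
            (pd i (fun y => g y l j) x + pd j (fun y => g y i l) x
              - pd l (fun y => g y i j) x)) * g x k s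
          = ∑ k, ∑ l, (1/2 : ℝ) * (pd i (fun y => g y l j) x + pd j (fun y => g y i l) x
              - pd l (fun y => g y i j) x) * ((g x)⁻¹ l k * g x k s) :=
            Finset.sum_congr rfl fun k _ => step1 k
        _ = ∑ l, (1/2 : ℝ) * (pd i (fun y => g y l j) x + pd j (fun y => g y i l) x
              - pd l (fun y => g y i j) x) * ∑ k, (g x)⁻¹ l k * g x k s := by
            rw [Finset.sum_comm]
            exact Finset.sum_congr rfl fun l _ => by rw [Finset.mul_sum]
        _ = ∑ l, (1/2 : ℝ) * (pd i (fun y => g y l j) x + pd j (fun y => g y i l) x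
              - pd l (fun y => g y i j) x) * (1 : Matrix (Fin n) (Fin n) ℝ) l s := by
            refine Finset.sum_congr rfl fun l _ => ?_
            rw [← hginv, Matrix.mul_apply]
        _ = (1/2) * (pd i (fun y => g y s j) x + pd j (fun y => g y i s) x
              - pd s (fun y => g y i j) x) := by
            simp [Matrix.one_apply]
    have hhalf : pd i (fun y => g y s j) x + pd j (fun y => g y i s) x
        - pd s (fun y => g y i j) x = 2 * ∑ p, A p s * S p i j := by
      rw [hD i s j, hD j i s, hD s i j, Finset.mul_sum, ← Finset.sum_add_distrib,
        ← Finset.sum_sub_distrib]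
      refine Finset.sum_congr rfl fun p _ => ?_
      rw [hSsymm p i s, hSsymm p j s, hSsymm p j i]
      ring
    have expand : ∑ p, A p s * (S p i j - ∑ k, christoffel g k i j x * A p k)
        = (∑ p, A p s * S p i j) - ∑ k, christoffel g k i j x * g x k s := by
      have h1 : ∑ p, A p s * (S p i j - ∑ k, christoffel g k i j x * A p k)
          = (∑ p, A p s * S p i j) - ∑ p, ∑ k, christoffel g k i j x * (A p k * A p s) := by
        rw [← Finset.sum_sub_distrib]
        refine Finset.sum_congr rfl fun p _ => ?_
        rw [mul_sub, Finset.mul_sum]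
        congr 1
        exact Finset.sum_congr rfl fun k _ => by ring
      rw [h1]
      congr 1
      rw [Finset.sum_comm]
      exact Finset.sum_congr rfl fun k _ => by rw [hGxs k, Finset.mul_sum]
    rw [expand, hGamma, hhalf]
    ring
  -- conclude via invertibility of grad u x
  have hv : (fun p => S p i j - ∑ k, christoffel g k i j x * A p k) ᵥ* (grad u x) = 0 := by
    funext s
    have h1 : ∀ p, grad u x p s = A p s := fun p => (hcoord p s x).symm
    simp only [Matrix.vecMul, dotProduct, Pi.zero_apply]
    calc ∑ p, (S p i j - ∑ k, christoffel g k i j x * A p k) * grad u x p s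
        = ∑ p, A p s * (S p i j - ∑ k, christoffel g k i j x * A p k) :=
          Finset.sum_congr rfl fun p _ => by rw [h1 p]; ring
      _ = 0 := key s
  have hv0 : (fun p => S p i j - ∑ k, christoffel g k i j x * A p k) = 0 := by
    have h2 := congrArg (fun w => w ᵥ* (grad u x)⁻¹) hv
    simpa [Matrix.vecMul_vecMul, Matrix.mul_nonsing_inv _ hJdet] using h2
  have hm := congrFun hv0 m
  simpa [hAdef, hSdef] using hm
end

section
/- Define f(x, F) = sqrt(det g(x)) · F · g(x)^{-1} − cof F for x ∈ U and F ∈ R^{n×n}. Then f(x, F) = 0 whenever F ∈ SO(n)·A(x), and for ‖F‖ ≤ M one has |f(x, F)|² ≤ C_M² dist²(F, SO(n)·A(x)), where C_M is a Lipschitz constant of f(x, ·) on the ball of radius depending on M, uniform in x. -/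
open Matrix

attribute [local instance] Matrix.frobeniusNormedAddCommGroup Matrix.frobeniusNormedSpace

/-- The cofactor matrix: `cof F = (adjugate F)ᵀ`. -/
noncomputable def cof {n : ℕ} (F : Matrix (Fin n) (Fin n) ℝ) : Matrix (Fin n) (Fin n) ℝ :=
  (Matrix.adjugate F)ᵀ

/-- The special orthogonal group `SO(n)` as a set of matrices. -/
def SOn (n : ℕ) : Set (Matrix (Fin n) (Fin n) ℝ) :=
  {R | Rᵀ * R = 1 ∧ R.det = 1}

/-- The energy well `𝓕(x) = SO(n)·A(x)`. -/
def SOA {n : ℕ} (A : (Fin n → ℝ) → Matrix (Fin n) (Fin n) ℝ) (x : Fin n → ℝ) :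
    Set (Matrix (Fin n) (Fin n) ℝ) :=
  {F | ∃ R ∈ SOn n, F = R * A x}

/-- Each entry of a matrix is bounded by its Frobenius norm. -/
lemma entry_le_norm {n : ℕ} (F : Matrix (Fin n) (Fin n) ℝ) (i j : Fin n) : |F i j| ≤ ‖F‖ := by
  have h := Matrix.frobenius_norm_def F
  have h1 : |F i j| ^ (2:ℝ) ≤ ∑ a, ∑ b, ‖F a b‖ ^ (2:ℝ) := by
    calc |F i j| ^ (2:ℝ) ≤ ∑ b, ‖F i b‖ ^ (2:ℝ) := by
          apply Finset.single_le_sum (f := fun b => ‖F i b‖ ^ (2:ℝ)) (fun b _ => by positivity)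
            (Finset.mem_univ j)
      _ ≤ ∑ a, ∑ b, ‖F a b‖ ^ (2:ℝ) := by
          apply Finset.single_le_sum (f := fun a => ∑ b, ‖F a b‖ ^ (2:ℝ))
            (fun a _ => by positivity) (Finset.mem_univ i)
  have h2 : (|F i j| ^ (2:ℝ)) ^ (1/2:ℝ) ≤ (∑ a, ∑ b, ‖F a b‖ ^ (2:ℝ)) ^ (1/2:ℝ) :=
    Real.rpow_le_rpow (by positivity) h1 (by norm_num)
  rw [← Real.rpow_mul (abs_nonneg _), show (2:ℝ) * (1/2) = 1 by norm_num, Real.rpow_one] at h2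
  rw [h]; exact h2

/-- The Frobenius norm is bounded by `n` times an entrywise bound. -/
lemma norm_le_of_entries {n : ℕ} (F : Matrix (Fin n) (Fin n) ℝ) (c : ℝ) (hc : 0 ≤ c)
    (h : ∀ i j, |F i j| ≤ c) : ‖F‖ ≤ n * c := by
  rw [Matrix.frobenius_norm_def]
  have h1 : ∑ a : Fin n, ∑ b : Fin n, ‖F a b‖ ^ (2:ℝ) ≤ (n * c) ^ (2:ℝ) := by
    calc ∑ a : Fin n, ∑ b : Fin n, ‖F a b‖ ^ (2:ℝ) ≤ ∑ _a : Fin n, ∑ _b : Fin n, c ^ (2:ℝ) := by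
          apply Finset.sum_le_sum; intro a _; apply Finset.sum_le_sum; intro b _
          exact Real.rpow_le_rpow (abs_nonneg _) (h a b) (by norm_num)
      _ = (n^2 : ℝ) * c ^ (2:ℝ) := by simp [Finset.sum_const]; ring
      _ = (n * c) ^ (2:ℝ) := by
          rw [Real.rpow_two, Real.rpow_two]; ring
  calc (∑ a : Fin n, ∑ b : Fin n, ‖F a b‖ ^ (2:ℝ)) ^ (1/2:ℝ) ≤ ((n*c) ^ (2:ℝ)) ^ (1/2:ℝ) :=
        Real.rpow_le_rpow (by positivity) h1 (by norm_num)
    _ = n * c := by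
        rw [← Real.rpow_mul (by positivity), show (2:ℝ) * (1/2) = 1 by norm_num, Real.rpow_one]

/-- Lipschitz-type bound for a difference of products. -/
lemma prod_diff_le {ι : Type*} [DecidableEq ι] (s : Finset ι) (a b : ι → ℝ) (r δ : ℝ)
    (hr : 0 ≤ r) (hδ : 0 ≤ δ) (ha : ∀ i, |a i| ≤ r) (hb : ∀ i, |b i| ≤ r)
    (hab : ∀ i, |a i - b i| ≤ δ) :
    |∏ i ∈ s, a i - ∏ i ∈ s, b i| ≤ s.card * r ^ (s.card - 1) * δ := by
  induction s using Finset.induction with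
  | empty => simp
  | @insert i s hi ih =>
    rw [Finset.prod_insert hi, Finset.prod_insert hi, Finset.card_insert_of_notMem hi]
    have key : a i * ∏ j ∈ s, a j - b i * ∏ j ∈ s, b j
        = (a i - b i) * ∏ j ∈ s, a j + b i * (∏ j ∈ s, a j - ∏ j ∈ s, b j) := by ring
    rw [key]
    have hpa : |∏ j ∈ s, a j| ≤ r ^ s.card := by
      rw [Finset.abs_prod]
      calc ∏ j ∈ s, |a j| ≤ ∏ _j ∈ s, r :=
            Finset.prod_le_prod (fun _ _ => abs_nonneg _) (fun j _ => ha j)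
        _ = r ^ s.card := Finset.prod_const r
    calc |(a i - b i) * ∏ j ∈ s, a j + b i * (∏ j ∈ s, a j - ∏ j ∈ s, b j)|
        ≤ |(a i - b i) * ∏ j ∈ s, a j| + |b i * (∏ j ∈ s, a j - ∏ j ∈ s, b j)| := abs_add_le _ _
      _ = |a i - b i| * |∏ j ∈ s, a j| + |b i| * |∏ j ∈ s, a j - ∏ j ∈ s, b j| := by
          rw [abs_mul, abs_mul]
      _ ≤ δ * r ^ s.card + r * (s.card * r ^ (s.card - 1) * δ) := by
          gcongr
          · exact hab i
          · exact hb i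
      _ ≤ (s.card + 1) * r ^ (s.card + 1 - 1) * δ := by
          rcases Nat.eq_zero_or_pos s.card with h0 | h0
          · simp [h0]
          · have : r * r ^ (s.card - 1) = r ^ s.card := by
              rw [← pow_succ']; congr 1; omega
            simp only [Nat.add_sub_cancel]
            have h2 : r * (↑s.card * r ^ (s.card - 1) * δ) = ↑s.card * r ^ s.card * δ := by
              rw [← this]; ring
            rw [h2]; ring_nf; rfl
      _ = (↑(s.card + 1)) * r ^ (s.card + 1 - 1) * δ := by push_cast; ring_nf

/-- Lipschitz-type bound for the determinant on a bounded set. -/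
lemma det_diff_le {n : ℕ} (X Y : Matrix (Fin n) (Fin n) ℝ) (r δ : ℝ) (hr : 0 ≤ r) (hδ : 0 ≤ δ)
    (hX : ∀ i j, |X i j| ≤ r) (hY : ∀ i j, |Y i j| ≤ r) (hXY : ∀ i j, |X i j - Y i j| ≤ δ) :
    |X.det - Y.det| ≤ (Nat.factorial n) * n * r ^ (n - 1) * δ := by
  rw [Matrix.det_apply, Matrix.det_apply, ← Finset.sum_sub_distrib]
  calc |∑ σ : Equiv.Perm (Fin n), (Equiv.Perm.sign σ • ∏ i, X (σ i) i
          - Equiv.Perm.sign σ • ∏ i, Y (σ i) i)|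
      ≤ ∑ σ : Equiv.Perm (Fin n), |Equiv.Perm.sign σ • ∏ i, X (σ i) i
          - Equiv.Perm.sign σ • ∏ i, Y (σ i) i| := Finset.abs_sum_le_sum_abs _ _
    _ ≤ ∑ _σ : Equiv.Perm (Fin n), (n : ℝ) * r ^ (n - 1) * δ := by
        apply Finset.sum_le_sum; intro σ _
        rw [← smul_sub]
        have h1 : |Equiv.Perm.sign σ • (∏ i, X (σ i) i - ∏ i, Y (σ i) i)|
            = |∏ i, X (σ i) i - ∏ i, Y (σ i) i| := by
          rcases Int.units_eq_one_or (Equiv.Perm.sign σ) with h | h <;> simp [h, abs_sub_comm]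
        rw [h1]
        have := prod_diff_le (Finset.univ : Finset (Fin n)) (fun i => X (σ i) i)
          (fun i => Y (σ i) i) r δ hr hδ (fun i => hX _ _) (fun i => hY _ _) (fun i => hXY _ _)
        simpa using this
    _ = (Nat.factorial n) * n * r ^ (n - 1) * δ := by
        rw [Finset.sum_const, Finset.card_univ, Fintype.card_perm, Fintype.card_fin,
          nsmul_eq_mul]
        ring

/-- Lipschitz bound for the cofactor map on a bounded set. -/
lemma cof_lip {n : ℕ} (r : ℝ) (F₁ F₂ : Matrix (Fin n) (Fin n) ℝ)
    (h1 : ‖F₁‖ ≤ r) (h2 : ‖F₂‖ ≤ r) :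
    ‖cof F₁ - cof F₂‖ ≤ (n * ((Nat.factorial n) * n * (max r 1) ^ (n - 1))) * ‖F₁ - F₂‖ := by
  set δ := ‖F₁ - F₂‖ with hδdef
  have hδ : 0 ≤ δ := norm_nonneg _
  have key : ∀ i j : Fin n, |(cof F₁ - cof F₂) i j|
      ≤ (Nat.factorial n) * n * (max r 1) ^ (n - 1) * δ := by
    intro i j
    have e : (cof F₁ - cof F₂) i j
        = (F₁.updateRow i (Pi.single j 1)).det - (F₂.updateRow i (Pi.single j 1)).det := by
      simp [cof, Matrix.transpose_apply, Matrix.adjugate_apply, Matrix.sub_apply]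
    rw [e]
    apply det_diff_le _ _ (max r 1) δ (by positivity) hδ
    · intro a b
      rw [Matrix.updateRow_apply]
      split
      · rcases eq_or_ne b j with h | h <;> simp [Pi.single_apply, h]
      · exact le_trans (le_trans (entry_le_norm F₁ a b) h1) (le_max_left _ _)
    · intro a b
      rw [Matrix.updateRow_apply]
      split
      · rcases eq_or_ne b j with h | h <;> simp [Pi.single_apply, h]
      · exact le_trans (le_trans (entry_le_norm F₂ a b) h2) (le_max_left _ _)
    · intro a b
      rw [Matrix.updateRow_apply, Matrix.updateRow_apply]
      split
      · simp [hδ]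
      · have := entry_le_norm (F₁ - F₂) a b
        simpa [Matrix.sub_apply] using this
  have := norm_le_of_entries (cof F₁ - cof F₂) _ (by positivity) key
  calc ‖cof F₁ - cof F₂‖ ≤ n * ((Nat.factorial n) * n * (max r 1) ^ (n - 1) * δ) := this
    _ = (n * ((Nat.factorial n) * n * (max r 1) ^ (n - 1))) * δ := by ring

/-- `f(x,·)` vanishes on `SO(n)·A(x)`. -/
lemma f_zero_aux {n : ℕ} (g A R : Matrix (Fin n) (Fin n) ℝ)
    (hA_symm : A.IsSymm) (hA_pos : A.PosDef) (hA_sq : A * A = g)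
    (hR : Rᵀ * R = 1) (hdR : R.det = 1) :
    Real.sqrt g.det • ((R * A) * g⁻¹) - cof (R * A) = 0 := by
  have hdetA : 0 < A.det := hA_pos.det_pos
  have hdetA' : IsUnit A.det := isUnit_iff_ne_zero.2 (ne_of_gt hdetA)
  have hgdet : g.det = A.det ^ 2 := by rw [← hA_sq, Matrix.det_mul, sq]
  have hsqrt : Real.sqrt g.det = A.det := by
    rw [hgdet, Real.sqrt_sq hdetA.le]
  have hginv : g⁻¹ = A⁻¹ * A⁻¹ := by rw [← hA_sq, Matrix.mul_inv_rev]
  have hAinv : A * A⁻¹ = 1 := Matrix.mul_nonsing_inv A hdetA'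
  have hRinv : R⁻¹ = Rᵀ := Matrix.inv_eq_left_inv hR
  have hadjR : adjugate R = Rᵀ := by
    have h1 : R * adjugate R = 1 := by rw [Matrix.mul_adjugate, hdR, one_smul]
    rw [← Matrix.inv_eq_right_inv h1, hRinv]
  have hadjA : adjugate A = A.det • A⁻¹ := by
    rw [Matrix.inv_def, smul_smul, Ring.inverse_eq_inv, mul_inv_cancel₀ (ne_of_gt hdetA),
      one_smul]
  have hcof : cof (R * A) = A.det • (R * A⁻¹) := by
    rw [cof, Matrix.adjugate_mul_distrib, Matrix.transpose_mul, hadjR, transpose_transpose,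
      hadjA]
    rw [Matrix.transpose_smul, Matrix.mul_smul]
    congr 1
    rw [Matrix.transpose_nonsing_inv, hA_symm.eq]
  rw [hcof, hsqrt, hginv, Matrix.mul_assoc, ← Matrix.mul_assoc A A⁻¹ A⁻¹, hAinv, Matrix.one_mul]
  exact sub_self _

/-- Uniform Lipschitz bound for `f(x,·)` on a ball. -/
lemma f_lip_aux {n : ℕ} (K' r : ℝ) (g : Matrix (Fin n) (Fin n) ℝ)
    (hg1 : ‖g‖ ≤ K') (hg2 : ‖g⁻¹‖ ≤ K') (F₁ F₂ : Matrix (Fin n) (Fin n) ℝ)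
    (h1 : ‖F₁‖ ≤ r) (h2 : ‖F₂‖ ≤ r) :
    ‖(Real.sqrt g.det • (F₁ * g⁻¹) - cof F₁) - (Real.sqrt g.det • (F₂ * g⁻¹) - cof F₂)‖
      ≤ (Real.sqrt ((Nat.factorial n) * K' ^ n) * K'
          + n * ((Nat.factorial n) * n * (max r 1) ^ (n - 1))) * ‖F₁ - F₂‖ := by
  have hdet : |g.det| ≤ (Nat.factorial n) * K' ^ n := by
    have := Matrix.det_le (A := g) (abv := AbsoluteValue.abs) (x := K')
      (fun i j => le_trans (entry_le_norm g i j) hg1)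
    simpa [Fintype.card_fin, nsmul_eq_mul] using this
  have hsqrt : Real.sqrt g.det ≤ Real.sqrt ((Nat.factorial n) * K' ^ n) :=
    Real.sqrt_le_sqrt (le_trans (le_abs_self _) hdet)
  have key : (Real.sqrt g.det • (F₁ * g⁻¹) - cof F₁) - (Real.sqrt g.det • (F₂ * g⁻¹) - cof F₂)
      = Real.sqrt g.det • ((F₁ - F₂) * g⁻¹) - (cof F₁ - cof F₂) := by
    rw [Matrix.sub_mul, smul_sub]; abel
  rw [key]
  calc ‖Real.sqrt g.det • ((F₁ - F₂) * g⁻¹) - (cof F₁ - cof F₂)‖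
      ≤ ‖Real.sqrt g.det • ((F₁ - F₂) * g⁻¹)‖ + ‖cof F₁ - cof F₂‖ := norm_sub_le _ _
    _ ≤ Real.sqrt ((Nat.factorial n) * K' ^ n) * (‖F₁ - F₂‖ * K')
        + (n * ((Nat.factorial n) * n * (max r 1) ^ (n - 1))) * ‖F₁ - F₂‖ := by
        gcongr
        · rw [norm_smul, Real.norm_eq_abs, abs_of_nonneg (Real.sqrt_nonneg _)]
          gcongr
          exact le_trans (Matrix.frobenius_norm_mul _ _) (by gcongr)
        · exact cof_lip r F₁ F₂ h1 h2
    _ = (Real.sqrt ((Nat.factorial n) * K' ^ n) * K'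
          + n * ((Nat.factorial n) * n * (max r 1) ^ (n - 1))) * ‖F₁ - F₂‖ := by ring

/-- Bound on the norm of the square root of the metric. -/
lemma normA_le_aux {n : ℕ} (g A : Matrix (Fin n) (Fin n) ℝ) (hA_symm : A.IsSymm)
    (hA_sq : A * A = g) (K' : ℝ) (hg1 : ‖g‖ ≤ K') :
    ‖A‖ ≤ Real.sqrt (n * K') := by
  have htr : ∑ i, ∑ j, (A i j) ^ 2 = g.trace := by
    rw [← hA_sq, Matrix.trace]
    apply Finset.sum_congr rfl
    intro i _
    rw [Matrix.diag_apply, Matrix.mul_apply]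
    apply Finset.sum_congr rfl
    intro j _
    rw [hA_symm.apply i j, sq]
  have htr2 : g.trace ≤ n * K' := by
    rw [Matrix.trace]
    calc ∑ i, g.diag i ≤ ∑ _i : Fin n, K' := by
          apply Finset.sum_le_sum
          intro i _
          exact le_trans (le_abs_self _) (le_trans (entry_le_norm g i i) hg1)
      _ = n * K' := by simp [Finset.sum_const, nsmul_eq_mul]
  rw [Matrix.frobenius_norm_def]
  have h1 : ∑ i, ∑ j, ‖A i j‖ ^ (2:ℝ) ≤ n * K' := by
    calc ∑ i, ∑ j, ‖A i j‖ ^ (2:ℝ) = ∑ i, ∑ j, (A i j) ^ 2 := by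
          apply Finset.sum_congr rfl; intro i _; apply Finset.sum_congr rfl; intro j _
          rw [Real.rpow_two, Real.norm_eq_abs, sq_abs]
      _ = g.trace := htr
      _ ≤ n * K' := htr2
  calc (∑ i, ∑ j, ‖A i j‖ ^ (2:ℝ)) ^ (1/2:ℝ) ≤ (n * K' : ℝ) ^ (1/2:ℝ) :=
        Real.rpow_le_rpow (by positivity) h1 (by norm_num)
    _ = Real.sqrt (n * K') := by rw [Real.sqrt_eq_rpow]

/-- for `f(x,F) = √(det g(x)) F g(x)⁻¹ - cof F`, one has `f(x,F) = 0` whenever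
`F ∈ SO(n)·A(x)`, and for every bound `M` there is a (Lipschitz) constant `C_M` with
`|f(x,F)|² ≤ C_M² dist²(F, SO(n)·A(x))` whenever `‖F‖ ≤ M`, uniformly in `x ∈ U`. -/
theorem cofactor_defect_estimate
    (n : ℕ) (U : Set (Fin n → ℝ)) (hU : IsOpen U) (hUb : Bornology.IsBounded U)
    (g A : (Fin n → ℝ) → Matrix (Fin n) (Fin n) ℝ)
    (hg_smooth : ∀ i j, ContDiff ℝ (⊤ : ℕ∞) (fun x => g x i j))
    (hg_bdd : ∃ K, ∀ x ∈ U, ‖g x‖ + ‖(g x)⁻¹‖ ≤ K)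
    (hg_symm : ∀ x ∈ U, (g x).IsSymm) (hg_pos : ∀ x ∈ U, (g x).PosDef)
    (hA_symm : ∀ x ∈ U, (A x).IsSymm) (hA_pos : ∀ x ∈ U, (A x).PosDef)
    (hA_sq : ∀ x ∈ U, A x * A x = g x)
    (f : (Fin n → ℝ) → Matrix (Fin n) (Fin n) ℝ → Matrix (Fin n) (Fin n) ℝ)
    (hf : ∀ x F, f x F = Real.sqrt (g x).det • (F * (g x)⁻¹) - cof F) :
    (∀ x ∈ U, ∀ F ∈ SOA A x, f x F = 0) ∧
    (∀ M > (0 : ℝ), ∃ C_M ≥ (0 : ℝ),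
      (∀ x ∈ U, ∀ F₁ F₂ : Matrix (Fin n) (Fin n) ℝ, ‖F₁‖ ≤ M → ‖F₂‖ ≤ M →
        ‖f x F₁ - f x F₂‖ ≤ C_M * ‖F₁ - F₂‖) ∧
      ∀ x ∈ U, ∀ F : Matrix (Fin n) (Fin n) ℝ, ‖F‖ ≤ M →
        ‖f x F‖ ^ 2 ≤ C_M ^ 2 * (Metric.infDist F (SOA A x)) ^ 2) := by
  have hzero : ∀ x ∈ U, ∀ F ∈ SOA A x, f x F = 0 := by
    intro x hx F hF
    obtain ⟨R, ⟨hR, hdR⟩, rfl⟩ := hF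
    rw [hf]
    exact f_zero_aux (g x) (A x) R (hA_symm x hx) (hA_pos x hx) (hA_sq x hx) hR hdR
  refine ⟨hzero, ?_⟩
  intro M hM
  obtain ⟨K, hK⟩ := hg_bdd
  set K' : ℝ := max K 0 with hK'def
  have hK'0 : (0:ℝ) ≤ K' := le_max_right K 0
  have hgK : ∀ x ∈ U, ‖g x‖ ≤ K' ∧ ‖(g x)⁻¹‖ ≤ K' := by
    intro x hx
    have h := hK x hx
    have h1 := norm_nonneg (g x)
    have h2 := norm_nonneg (g x)⁻¹
    constructor
    · exact le_trans (by linarith) (le_max_left K 0)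
    · exact le_trans (by linarith) (le_max_left K 0)
  set a : ℝ := Real.sqrt (n * K') with hadef
  have ha0 : 0 ≤ a := Real.sqrt_nonneg _
  set r : ℝ := 2 * M + a + 1 with hrdef
  have hMr : M ≤ r := by simp only [hrdef]; linarith
  have har : a ≤ r := by simp only [hrdef]; linarith
  set C : ℝ := Real.sqrt ((Nat.factorial n) * K' ^ n) * K'
      + n * ((Nat.factorial n) * n * (max r 1) ^ (n - 1)) + 1 with hCdef
  have hC0 : (0:ℝ) ≤ C := by
    have h1 : 0 ≤ Real.sqrt ((Nat.factorial n) * K' ^ n) * K' :=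
      mul_nonneg (Real.sqrt_nonneg _) hK'0
    have h2 : (0:ℝ) ≤ n * ((Nat.factorial n) * n * (max r 1) ^ (n - 1)) := by positivity
    linarith
  have hCpos : (0:ℝ) < C := by
    have h1 : 0 ≤ Real.sqrt ((Nat.factorial n) * K' ^ n) * K' :=
      mul_nonneg (Real.sqrt_nonneg _) hK'0
    have h2 : (0:ℝ) ≤ n * ((Nat.factorial n) * n * (max r 1) ^ (n - 1)) := by positivity
    simp only [hCdef]; linarith
  -- Lipschitz on the ball of radius r, for each x ∈ U
  have lip : ∀ x ∈ U, ∀ F₁ F₂ : Matrix (Fin n) (Fin n) ℝ, ‖F₁‖ ≤ r → ‖F₂‖ ≤ r →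
      ‖f x F₁ - f x F₂‖ ≤ C * ‖F₁ - F₂‖ := by
    intro x hx F₁ F₂ h1 h2
    rw [hf, hf]
    have := f_lip_aux K' r (g x) (hgK x hx).1 (hgK x hx).2 F₁ F₂ h1 h2
    refine le_trans this ?_
    have hle : Real.sqrt ((Nat.factorial n) * K' ^ n) * K'
        + n * ((Nat.factorial n) * n * (max r 1) ^ (n - 1)) ≤ C := by
      simp only [hCdef]; linarith
    exact mul_le_mul_of_nonneg_right hle (norm_nonneg _)
  refine ⟨C, hC0, ?_, ?_⟩
  · intro x hx F₁ F₂ h1 h2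
    exact lip x hx F₁ F₂ (le_trans h1 hMr) (le_trans h2 hMr)
  · intro x hx F hF
    have hnormA : ‖A x‖ ≤ a := normA_le_aux (g x) (A x) (hA_symm x hx) (hA_sq x hx) K'
      (hgK x hx).1
    have hAmem : A x ∈ SOA A x := by
      refine ⟨1, ⟨?_, ?_⟩, (Matrix.one_mul _).symm⟩
      · rw [Matrix.transpose_one, Matrix.one_mul]
      · exact Matrix.det_one
    have hne : (SOA A x).Nonempty := ⟨A x, hAmem⟩
    -- key pointwise bound
    have key : ∀ G ∈ SOA A x, ‖f x F‖ ≤ C * ‖F - G‖ := by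
      intro G hG
      by_cases hGn : ‖G‖ ≤ r
      · have hfG : f x G = 0 := hzero x hx G hG
        calc ‖f x F‖ = ‖f x F - f x G‖ := by rw [hfG, sub_zero]
          _ ≤ C * ‖F - G‖ := lip x hx F G (le_trans hF hMr) hGn
      · push_neg at hGn
        have hFG : M + a + 1 ≤ ‖F - G‖ := by
          have h1 : ‖G‖ - ‖F‖ ≤ ‖F - G‖ := by
            have := norm_sub_norm_le (F - G) F
            simpa [norm_sub_rev] using (abs_le.1 (abs_norm_sub_norm_le G F)).2
          have : r - M ≤ ‖G‖ - ‖F‖ := by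
            have := hGn.le
            linarith
          simp only [hrdef] at this
          linarith
        have hfA : f x (A x) = 0 := hzero x hx (A x) hAmem
        calc ‖f x F‖ = ‖f x F - f x (A x)‖ := by rw [hfA, sub_zero]
          _ ≤ C * ‖F - A x‖ := lip x hx F (A x) (le_trans hF hMr) (le_trans hnormA har)
          _ ≤ C * (M + a) := by
              gcongr
              calc ‖F - A x‖ ≤ ‖F‖ + ‖A x‖ := norm_sub_le _ _
                _ ≤ M + a := add_le_add hF hnormA
          _ ≤ C * ‖F - G‖ := by
              gcongr
              linarith
    -- pass to the infimum
    have hinf : ‖f x F‖ ≤ C * Metric.infDist F (SOA A x) := by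
      by_contra hcon
      push_neg at hcon
      have hlt : Metric.infDist F (SOA A x) < ‖f x F‖ / C := by
        rw [lt_div_iff₀ hCpos]
        linarith [mul_comm C (Metric.infDist F (SOA A x))]
      obtain ⟨G, hG, hdist⟩ := (Metric.infDist_lt_iff hne).1 hlt
      rw [dist_eq_norm] at hdist
      have h1 := key G hG
      have h2 : C * ‖F - G‖ < C * (‖f x F‖ / C) := by
        exact mul_lt_mul_of_pos_left hdist hCpos
      rw [mul_div_cancel₀ _ (ne_of_gt hCpos)] at h2
      linarith
    have h0 : 0 ≤ Metric.infDist F (SOA A x) := Metric.infDist_nonneg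
    calc ‖f x F‖ ^ 2 ≤ (C * Metric.infDist F (SOA A x)) ^ 2 :=
          pow_le_pow_left₀ (norm_nonneg _) hinf 2
      _ = C ^ 2 * (Metric.infDist F (SOA A x)) ^ 2 := by ring
end

section
/- Let A be a symmetric positive definite n×n matrix. The tangent space at A to the manifold F = {R A : R ∈ SO(n)} equals {S A : S skew-symmetric}, and its orthogonal complement in R^{n×n} (with the Frobenius inner product) equals {S A^{-1} : S symmetric}. -/
/-!
A curve `γ t = R t * A` in `SO(n) · A` through `A` yields the curve `R t = γ t * A⁻¹` in `SO(n)`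
through `1`; differentiating `(R t)ᵀ * R t = 1` at `0` shows that `γ' 0 * A⁻¹` is skew.
Conversely `t ↦ exp (t • S) * A` has velocity `S * A` and stays in `SO(n) · A`, since `exp S` is
orthogonal with determinant `det (exp (S / 2)) ^ 2 ≥ 0`. For the complement, moving `A` across
the Frobenius product gives `frob (S * A) G = frob S (G * A)`, and the matrices orthogonal to all
skew matrices are exactly the symmetric ones, so `G` is orthogonal iff `G * A` is symmetric.
-/

open Matrix

attribute [local instance] Matrix.frobeniusNormedAddCommGroup Matrix.frobeniusNormedSpace

/-- The Frobenius inner product `F : G = tr(Fᵀ G)` on `ℝ^{n×n}`. -/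
noncomputable def frob {n : ℕ} (F G : Matrix (Fin n) (Fin n) ℝ) : ℝ :=
  Matrix.trace (Fᵀ * G)

attribute [local instance] Matrix.frobeniusNormedRing Matrix.frobeniusNormedAlgebra

open NormedSpace

namespace Matrix

variable {m : Type*} [Fintype m]

theorem trace_transpose_mul_eq_zero_of_transpose_eq_neg {K M : Matrix m m ℝ} (hK : Kᵀ = -K)
    (hM : M.IsSymm) : trace (Kᵀ * M) = 0 := by
  have h : trace (Kᵀ * M) = -trace (Kᵀ * M) :=
    calc trace (Kᵀ * M) = trace (M * K) := by
          rw [← trace_transpose, transpose_mul, transpose_transpose, hM.eq]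
      _ = trace (K * M) := trace_mul_comm _ _
      _ = -trace (Kᵀ * M) := by rw [hK, Matrix.neg_mul, trace_neg, neg_neg]
  linarith

theorem isSymm_iff_forall_trace_transpose_mul_eq_zero {M : Matrix m m ℝ} :
    M.IsSymm ↔ ∀ K : Matrix m m ℝ, Kᵀ = -K → trace (Kᵀ * M) = 0 := by
  refine ⟨fun hM K hK ↦ trace_transpose_mul_eq_zero_of_transpose_eq_neg hK hM, fun h ↦ ?_⟩
  -- The skew part `K` of `M` is orthogonal to every skew matrix, in particular to itself.
  set K := M - Mᵀ
  have hK : Kᵀ = -K := by simp [K]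
  have hsym : (M + Mᵀ).IsSymm := by simp [IsSymm, add_comm]
  have hKK : trace (Kᵀ * K) = 0 := by
    have h2M : K = 2 • M - (M + Mᵀ) := by simp only [K]; abel
    rw [h2M, Matrix.mul_sub, trace_sub, Matrix.mul_smul, trace_smul, ← h2M, h K hK,
      trace_transpose_mul_eq_zero_of_transpose_eq_neg hK hsym, smul_zero, sub_zero]
  rw [← conjTranspose_eq_transpose_of_trivial, trace_conjTranspose_mul_self_eq_zero_iff,
    sub_eq_zero] at hKK
  exact hKK.symm

variable [DecidableEq m]

theorem transpose_exp_mul_exp_of_transpose_eq_neg {S : Matrix m m ℝ} (hS : Sᵀ = -S) :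
    (exp S)ᵀ * exp S = 1 := by
  rw [← exp_transpose, hS, ← exp_add_of_commute _ _ (Commute.refl S).neg_left, neg_add_cancel,
    exp_zero]

theorem det_exp_nonneg (S : Matrix m m ℝ) : 0 ≤ (exp S).det := by
  have hhalf : exp S = exp ((2⁻¹ : ℝ) • S) * exp ((2⁻¹ : ℝ) • S) := by
    rw [← exp_add_of_commute _ _ (Commute.refl _), ← add_smul]
    norm_num
  rw [hhalf, det_mul]
  exact mul_self_nonneg _

theorem transpose_eq_neg_of_hasDerivAt_of_transpose_mul_self_eq_one {ρ : ℝ → Matrix m m ℝ}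
    {X : Matrix m m ℝ} (horth : ∀ t, (ρ t)ᵀ * ρ t = 1) (h0 : ρ 0 = 1)
    (hρ : HasDerivAt ρ X 0) : Xᵀ = -X := by
  -- Over `ℝ`, `star` is the transpose.
  have hρT : HasDerivAt (fun t ↦ (ρ t)ᵀ) Xᵀ 0 := hρ.star
  have hprod : HasDerivAt (fun t ↦ (ρ t)ᵀ * ρ t) (Xᵀ * ρ 0 + (ρ 0)ᵀ * X) 0 := hρT.mul hρ
  simp only [horth, h0, transpose_one, Matrix.mul_one, Matrix.one_mul] at hprod
  exact eq_neg_of_add_eq_zero_left (hprod.unique (hasDerivAt_const 0 1))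

end Matrix

theorem exp_mem_SOn {n : ℕ} {S : Matrix (Fin n) (Fin n) ℝ} (hS : Sᵀ = -S) : exp S ∈ SOn n := by
  have horth := transpose_exp_mul_exp_of_transpose_eq_neg hS
  have hsq : (exp S).det * (exp S).det = 1 := by
    simpa using congrArg det horth
  exact ⟨horth, by nlinarith [det_exp_nonneg S]⟩

theorem frob_mul_left {n : ℕ} (S A G : Matrix (Fin n) (Fin n) ℝ) :
    frob (S * A) G = frob S (G * Aᵀ) := by
  rw [frob, frob, transpose_mul, Matrix.mul_assoc, trace_mul_comm, Matrix.mul_assoc]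

theorem velocities_SOn_mul_eq {n : ℕ} {A : Matrix (Fin n) (Fin n) ℝ} (hA : IsUnit A.det) :
    {F | ∃ γ : ℝ → Matrix (Fin n) (Fin n) ℝ,
        (∀ t, ∃ R ∈ SOn n, γ t = R * A) ∧ γ 0 = A ∧ HasDerivAt γ F 0}
      = {F | ∃ S : Matrix (Fin n) (Fin n) ℝ, Sᵀ = -S ∧ F = S * A} := by
  ext F
  constructor
  · rintro ⟨γ, hγ, h0, hF⟩
    have horth : ∀ t, (γ t * A⁻¹)ᵀ * (γ t * A⁻¹) = 1 := fun t ↦ by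
      obtain ⟨R, ⟨hR, _⟩, hγt⟩ := hγ t
      rwa [hγt, mul_nonsing_inv_cancel_right _ _ hA]
    refine ⟨F * A⁻¹, transpose_eq_neg_of_hasDerivAt_of_transpose_mul_self_eq_one horth
      (by rw [h0, mul_nonsing_inv _ hA]) (hF.mul_const _), ?_⟩
    rw [nonsing_inv_mul_cancel_right _ _ hA]
  · rintro ⟨S, hS, rfl⟩
    refine ⟨fun t ↦ exp (t • S) * A, fun t ↦ ⟨_, exp_mem_SOn ?_, rfl⟩, by simp, ?_⟩
    · rw [transpose_smul, hS, smul_neg]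
    · have h := (hasDerivAt_exp_smul_const S (0 : ℝ)).mul_const A
      rwa [zero_smul, exp_zero, Matrix.one_mul] at h

theorem frob_orthogonal_skew_mul_eq {n : ℕ} {A : Matrix (Fin n) (Fin n) ℝ} (hA_symm : A.IsSymm)
    (hA : IsUnit A.det) :
    {G | ∀ S : Matrix (Fin n) (Fin n) ℝ, Sᵀ = -S → frob (S * A) G = 0}
      = {G | ∃ S : Matrix (Fin n) (Fin n) ℝ, S.IsSymm ∧ G = S * A⁻¹} := by
  ext G
  have hG : (∀ S : Matrix (Fin n) (Fin n) ℝ, Sᵀ = -S → frob (S * A) G = 0) ↔ (G * A).IsSymm := by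
    rw [isSymm_iff_forall_trace_transpose_mul_eq_zero]
    simp_rw [frob_mul_left, hA_symm.eq, frob]
  refine hG.trans ⟨fun hGA ↦ ⟨G * A, hGA, (mul_nonsing_inv_cancel_right _ _ hA).symm⟩, ?_⟩
  rintro ⟨S, hS, rfl⟩
  rwa [nonsing_inv_mul_cancel_right _ _ hA]

/-- for `A` symmetric positive definite, the tangent space at `A` to
`𝓕 = {R A : R ∈ SO(n)}` (velocities at `t = 0` of curves in `𝓕` through `A`) equals
`skew · A`, and its Frobenius-orthogonal complement equals `sym · A⁻¹`. -/
theorem tangent_space_of_energy_well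
    (n : ℕ) (A : Matrix (Fin n) (Fin n) ℝ) (hA_symm : A.IsSymm) (hA_pos : A.PosDef) :
    ({F | ∃ γ : ℝ → Matrix (Fin n) (Fin n) ℝ,
        (∀ t, ∃ R ∈ SOn n, γ t = R * A) ∧ γ 0 = A ∧ HasDerivAt γ F 0}
      = {F | ∃ S : Matrix (Fin n) (Fin n) ℝ, Sᵀ = -S ∧ F = S * A}) ∧
    ({G | ∀ S : Matrix (Fin n) (Fin n) ℝ, Sᵀ = -S → frob (S * A) G = 0}
      = {G | ∃ S : Matrix (Fin n) (Fin n) ℝ, S.IsSymm ∧ G = S * A⁻¹}) := by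
  have hA : IsUnit A.det := hA_pos.det_pos.ne'.isUnit
  exact ⟨velocities_SOn_mul_eq hA, frob_orthogonal_skew_mul_eq hA_symm hA⟩
end

section
/- Let A be symmetric positive definite. For every F ∈ R^{n×n}, the orthogonal projection of F onto the subspace {S A^{-1} : S symmetric} equals B A^{-1}, where B is the unique symmetric matrix such that F A^{-1} − B A^{-2} is skew-symmetric. -/
/-!
With `M = A⁻² = (A⁻¹)ᵀ A⁻¹`, skewness of `F A⁻¹ - B M` for symmetric `B` is the Lyapunov
equation `B M + M B = F A⁻¹ + (F A⁻¹)ᵀ`. As `M` is the Gram matrix of an invertible matrix,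
the Lyapunov operator is injective, hence bijective, and its solution for a symmetric right-hand
side is symmetric. Orthogonality: `⟨F - B A⁻¹, S A⁻¹⟩ = tr (S Kᵀ)` with `K = F A⁻¹ - B M` skew,
and symmetric matrices are trace-orthogonal to skew ones.
-/

open Matrix

namespace Matrix

variable {ι R : Type*} [Fintype ι]

section CommRing

variable [CommRing R]

def lyapunovMap (M : Matrix ι ι R) : Matrix ι ι R →ₗ[R] Matrix ι ι R :=
  LinearMap.mulRight R M + LinearMap.mulLeft R M

@[simp]
theorem lyapunovMap_apply (M X : Matrix ι ι R) : lyapunovMap M X = X * M + M * X :=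
  rfl

theorem lyapunovMap_transpose {M : Matrix ι ι R} (hM : M.IsSymm) (X : Matrix ι ι R) :
    lyapunovMap M Xᵀ = (lyapunovMap M X)ᵀ := by
  rw [lyapunovMap_apply, lyapunovMap_apply, transpose_add, transpose_mul, transpose_mul, hM.eq,
    add_comm]

theorem transpose_sub_mul_eq_neg_iff {B M : Matrix ι ι R} (hB : B.IsSymm) (hM : M.IsSymm)
    (G : Matrix ι ι R) :
    (G - B * M)ᵀ = -(G - B * M) ↔ lyapunovMap M B = G + Gᵀ := by
  have : Gᵀ - M * B - -(G - B * M) = -(B * M + M * B - (G + Gᵀ)) := by abel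
  rw [transpose_sub, transpose_mul, hB.eq, hM.eq, lyapunovMap_apply, ← sub_eq_zero, this,
    neg_eq_zero, sub_eq_zero]

theorem trace_mul_eq_zero_of_isSymm_of_transpose_eq_neg [NoZeroDivisors R] [CharZero R]
    {S K : Matrix ι ι R} (hS : S.IsSymm) (hK : Kᵀ = -K) : trace (S * K) = 0 := by
  refine self_eq_neg.mp ?_
  calc trace (S * K) = trace (Kᵀ * Sᵀ) := by rw [← transpose_mul, trace_transpose]
    _ = -trace (S * K) := by rw [hK, hS.eq, neg_mul, trace_neg, trace_mul_comm]

end CommRing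

/-- For `M = Pᵀ P` with `P` invertible, `tr (Bᵀ (B M + M B)) = ‖B Pᵀ‖² + ‖P B‖²` in the
Frobenius norm, so `B M + M B = 0` forces `P B = 0`. -/
theorem eq_zero_of_lyapunovMap_eq_zero [DecidableEq ι] {P B : Matrix ι ι ℝ} (hP : IsUnit P.det)
    (hB : lyapunovMap (Pᵀ * P) B = 0) : B = 0 := by
  have hsum : trace ((B * Pᵀ)ᵀ * (B * Pᵀ)) + trace ((P * B)ᵀ * (P * B)) = 0 := by
    calc _ = trace (Bᵀ * lyapunovMap (Pᵀ * P) B) := by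
          rw [lyapunovMap_apply, Matrix.mul_add, trace_add, transpose_mul, transpose_mul,
            transpose_transpose, Matrix.mul_assoc, trace_mul_comm]
          simp only [Matrix.mul_assoc]
      _ = 0 := by rw [hB, Matrix.mul_zero, trace_zero]
  have hnonneg (X : Matrix ι ι ℝ) : 0 ≤ trace (Xᵀ * X) := by
    simpa using (posSemidef_conjTranspose_mul_self X).trace_nonneg
  have hPB : P * B = 0 := by
    rw [← trace_conjTranspose_mul_self_eq_zero_iff, conjTranspose_eq_transpose_of_trivial]
    linarith [hnonneg (B * Pᵀ), hnonneg (P * B)]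
  rw [← nonsing_inv_mul_cancel_left P B hP, hPB, Matrix.mul_zero]

theorem lyapunovMap_bijective [DecidableEq ι] {P : Matrix ι ι ℝ} (hP : IsUnit P.det) :
    Function.Bijective (lyapunovMap (Pᵀ * P)) := by
  have hinj : Function.Injective (lyapunovMap (Pᵀ * P)) := by
    rw [← LinearMap.ker_eq_bot, LinearMap.ker_eq_bot']
    exact fun B => eq_zero_of_lyapunovMap_eq_zero hP
  exact ⟨hinj, LinearMap.injective_iff_surjective.mp hinj⟩

theorem existsUnique_isSymm_lyapunovMap_eq [DecidableEq ι] {P C : Matrix ι ι ℝ}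
    (hP : IsUnit P.det) (hC : C.IsSymm) :
    ∃! B : Matrix ι ι ℝ, B.IsSymm ∧ lyapunovMap (Pᵀ * P) B = C := by
  obtain ⟨hinj, hsurj⟩ := lyapunovMap_bijective hP
  obtain ⟨B, hB⟩ := hsurj C
  have hBsymm : B.IsSymm := hinj <| by
    rw [lyapunovMap_transpose (isSymm_transpose_mul_self P), hB, hC.eq]
  exact ⟨B, ⟨hBsymm, hB⟩, fun B' hB' => hinj (hB'.2.trans hB.symm)⟩

end Matrix

theorem frob_mul_eq_trace {n : ℕ} (X S Q : Matrix (Fin n) (Fin n) ℝ) :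
    frob X (S * Q) = trace (S * (X * Qᵀ)ᵀ) := by
  rw [frob, trace_mul_comm, transpose_mul, transpose_transpose, Matrix.mul_assoc]

/-- for `A` symmetric positive definite and any `F`, there is a unique
symmetric `B` such that `F A⁻¹ - B A⁻²` is skew-symmetric, and then `B A⁻¹` is the
Frobenius-orthogonal projection of `F` onto the subspace `{S A⁻¹ : S symmetric}`, i.e.
`B A⁻¹` lies in this subspace and `F - B A⁻¹` is orthogonal to it. -/
theorem projection_onto_sym_Ainv
    (n : ℕ) (A : Matrix (Fin n) (Fin n) ℝ) (hA_symm : A.IsSymm) (hA_pos : A.PosDef)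
    (F : Matrix (Fin n) (Fin n) ℝ) :
    (∃! B : Matrix (Fin n) (Fin n) ℝ, B.IsSymm ∧
      (F * A⁻¹ - B * (A⁻¹ * A⁻¹))ᵀ = -(F * A⁻¹ - B * (A⁻¹ * A⁻¹))) ∧
    (∀ B : Matrix (Fin n) (Fin n) ℝ, B.IsSymm →
      (F * A⁻¹ - B * (A⁻¹ * A⁻¹))ᵀ = -(F * A⁻¹ - B * (A⁻¹ * A⁻¹)) →
      ∀ S : Matrix (Fin n) (Fin n) ℝ, S.IsSymm → frob (F - B * A⁻¹) (S * A⁻¹) = 0) := by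
  have hA_inv_symm : (A⁻¹)ᵀ = A⁻¹ := by rw [transpose_nonsing_inv, hA_symm.eq]
  have hA_inv_sq : A⁻¹ * A⁻¹ = (A⁻¹)ᵀ * A⁻¹ := by rw [hA_inv_symm]
  refine ⟨?_, fun B _ hskew S hS => ?_⟩
  · have hM : (A⁻¹ * A⁻¹).IsSymm := hA_inv_sq ▸ isSymm_transpose_mul_self A⁻¹
    have hskew_iff (B : Matrix (Fin n) (Fin n) ℝ) (hB : B.IsSymm) :=
      transpose_sub_mul_eq_neg_iff hB hM (F * A⁻¹)
    rw [existsUnique_congr fun B => and_congr_right (hskew_iff B), hA_inv_sq]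
    exact existsUnique_isSymm_lyapunovMap_eq
      (isUnit_nonsing_inv_det A hA_pos.det_pos.ne'.isUnit) (isSymm_add_transpose_self _)
  · have hK : (F - B * A⁻¹) * (A⁻¹)ᵀ = F * A⁻¹ - B * (A⁻¹ * A⁻¹) := by
      rw [hA_inv_symm, Matrix.sub_mul, Matrix.mul_assoc]
    rw [frob_mul_eq_trace, hK, hskew, Matrix.mul_neg, trace_neg,
      trace_mul_eq_zero_of_isSymm_of_transpose_eq_neg hS hskew, neg_zero]
end

section
/- Let Q₃ be a nonnegative quadratic form on R^{3×3} that is positive definite on the subspace sym·A^{-1} and depends only on the projection onto sym·A^{-1} (A symmetric positive definite of block form diag(A₂, 1)). Define Q₂(F₂) = min{ Q₃(F̃) : F̃ ∈ R^{3×3}, F̃ has 2×2 principal block F₂ }. Then the minimum is attained, Q₂ is a quadratic form on R^{2×2}, and there exists a linear map c : R^{2×2} → R³ such that Q₂(F₂) = Q₃ of the matrix with block F₂, third column (c₁, c₂, c₃) and zero entries in positions (3,1),(3,2). -/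
open Matrix

/-- The `2×2` principal block of a `3×3` matrix. -/
def blk (F : Matrix (Fin 3) (Fin 3) ℝ) : Matrix (Fin 2) (Fin 2) ℝ :=
  Matrix.of fun α β => F α.castSucc β.castSucc

/-- The `3×3` matrix with principal `2×2` block `M`, third column `v`, and zeros in
positions `(3,1)` and `(3,2)`. -/
def augment (M : Matrix (Fin 2) (Fin 2) ℝ) (v : Fin 3 → ℝ) : Matrix (Fin 3) (Fin 3) ℝ :=
  Matrix.of fun i j =>
    if hj : j = Fin.last 2 then v i
    else if hi : i = Fin.last 2 then 0
    else M (i.castPred hi) (j.castPred hj)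

/-!
Only the projection onto `sym·A⁻¹` matters, and adding `K A` with `K` antisymmetric does not
change it. Since `A` fixes `e₃`, the matrix `K = e₃ xᵀ - x e₃ᵀ` with `x = A⁻¹ρ` turns a third-row
perturbation `e₃ ρᵀ` into the third-column perturbation `x e₃ᵀ`; so every competitor can be
replaced by one of the form `augment F₂ v`. The same trade shows that `v e₃ᵀ` has the same value of `Q₃`
as a nonzero element of `sym·A⁻¹`, so `Q₃` is positive definite on third columns, and minimizing a
quadratic over an affine family whose direction carries a positive definite form has a minimizer
depending linearly on the base point.
-/

/-- The minimizer `c x` is the critical point: the polarization `Γ` of `B ∘ N` is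
nondegenerate, so it represents the functional `-(B x (N ·) + B (N ·) x)`. -/
theorem LinearMap.exists_linearMap_forall_apply_add_le {𝕜 V U : Type*} [Field 𝕜] [LinearOrder 𝕜]
    [IsStrictOrderedRing 𝕜] [AddCommGroup V] [Module 𝕜 V] [AddCommGroup U] [Module 𝕜 U]
    [FiniteDimensional 𝕜 U] (B : V →ₗ[𝕜] V →ₗ[𝕜] 𝕜) (N : U →ₗ[𝕜] V)
    (hN : ∀ u ≠ 0, 0 < B (N u) (N u)) :
    ∃ c : V →ₗ[𝕜] U, ∀ x u, B (x + N (c x)) (x + N (c x)) ≤ B (x + N u) (x + N u) := by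
  let φ : V →ₗ[𝕜] U →ₗ[𝕜] 𝕜 := B.compl₂ N + B.flip.compl₂ N
  let Γ : LinearMap.BilinForm 𝕜 U := φ ∘ₗ N
  have hΓ_diag (u : U) : Γ u u = 2 * B (N u) (N u) := by
    simp only [Γ, φ, comp_apply, add_apply, compl₂_apply, flip_apply]; ring
  have hΓ : Γ.Nondegenerate := by
    have h (u : U) (hu : Γ u u = 0) : u = 0 := by
      by_contra hne
      have := hN u hne
      rw [hΓ_diag] at hu
      linarith
    exact ⟨fun u hu => h u (hu u), fun u hu => h u (hu u)⟩
  refine ⟨-((Γ.toDual hΓ).symm.toLinearMap ∘ₗ φ), fun x u => ?_⟩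
  set c := -((Γ.toDual hΓ).symm.toLinearMap ∘ₗ φ)
  have hc (d : U) : Γ (c x) d = -φ x d := by
    change Γ (-(Γ.toDual hΓ).symm (φ x)) d = _
    rw [map_neg, neg_apply, BilinForm.apply_toDual_symm_apply]
  set y := x + N (c x)
  have hcross : B y (N (u - c x)) + B (N (u - c x)) y = 0 := by
    have := hc (u - c x)
    simp only [Γ, φ, comp_apply, add_apply, compl₂_apply, flip_apply] at this
    simp only [y, map_add, add_apply]
    linarith
  have hsplit : x + N u = y + N (u - c x) := by simp [y]
  have hnonneg : 0 ≤ B (N (u - c x)) (N (u - c x)) := by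
    rcases eq_or_ne (u - c x) 0 with h | h
    · simp [h]
    · exact (hN _ h).le
  rw [hsplit]
  simp only [map_add, add_apply]
  linarith

section

variable {m : ℕ} {A : Matrix (Fin m) (Fin m) ℝ}

def DependsOnlyOnSymProj (A : Matrix (Fin m) (Fin m) ℝ) (Q : Matrix (Fin m) (Fin m) ℝ → ℝ) :
    Prop :=
  ∀ F G : Matrix (Fin m) (Fin m) ℝ,
    (∀ S : Matrix (Fin m) (Fin m) ℝ, S.IsSymm → frob (F - G) (S * A⁻¹) = 0) → Q F = Q G

theorem frob_mul_mul_inv_eq_zero (hA : A.IsSymm) (hdet : IsUnit A.det)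
    {K S : Matrix (Fin m) (Fin m) ℝ} (hK : Kᵀ = -K) (hS : S.IsSymm) :
    frob (K * A) (S * A⁻¹) = 0 := by
  have hfrob : frob (K * A) (S * A⁻¹) = trace (Kᵀ * S) := by
    rw [frob, transpose_mul, hA.eq, ← Matrix.mul_assoc, trace_mul_comm, ← Matrix.mul_assoc,
      ← Matrix.mul_assoc, nonsing_inv_mul _ hdet, Matrix.one_mul]
  have hsymm : trace (Kᵀ * S) = trace (K * S) := by
    rw [← trace_transpose, transpose_mul, transpose_transpose, hS.eq, trace_mul_comm]
  rw [hK, neg_mul, trace_neg] at hsymm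
  rw [hfrob, hK, neg_mul, trace_neg]
  linarith

theorem isUnit_det_one_add_inv_mul_inv (hA : A.IsSymm) : IsUnit (1 + A⁻¹ * A⁻¹).det := by
  have hpsd : (A⁻¹ * A⁻¹).PosSemidef := by
    simpa [conjTranspose_eq_transpose_of_trivial, hA.inv.eq] using
      posSemidef_conjTranspose_mul_self A⁻¹
  exact (isUnit_iff_isUnit_det _).mp (PosDef.one.add_posSemidef hpsd).isUnit

theorem vecMulVec_add_vecMulVec_ne_zero {e w : Fin m → ℝ} (he1 : e ⬝ᵥ e = 1) (hw : w ≠ 0) :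
    vecMulVec w e + vecMulVec e w ≠ 0 := by
  intro h
  have hmul : w + (w ⬝ᵥ e) • e = 0 := by
    simpa [add_mulVec, vecMulVec_mulVec, he1, dotProduct_comm e w] using congrArg (· *ᵥ e) h
  have hdot : w ⬝ᵥ e = 0 := by
    have := congrArg (· ⬝ᵥ e) hmul
    simp only [add_dotProduct, smul_dotProduct, he1, smul_eq_mul, zero_dotProduct] at this
    linarith
  exact hw (by simpa [hdot] using hmul)

variable {Q : Matrix (Fin m) (Fin m) ℝ → ℝ}

theorem DependsOnlyOnSymProj.apply_add_mul (hQ : DependsOnlyOnSymProj A Q) (hA : A.IsSymm)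
    (hdet : IsUnit A.det) (F : Matrix (Fin m) (Fin m) ℝ) {K : Matrix (Fin m) (Fin m) ℝ}
    (hK : Kᵀ = -K) : Q (F + K * A) = Q F :=
  hQ _ _ fun S hS => by
    rw [add_sub_cancel_left]
    exact frob_mul_mul_inv_eq_zero hA hdet hK hS

theorem DependsOnlyOnSymProj.apply_add_vecMulVec (hQ : DependsOnlyOnSymProj A Q)
    (hA : A.IsSymm) (hdet : IsUnit A.det) {e : Fin m → ℝ} (he : A *ᵥ e = e)
    (F : Matrix (Fin m) (Fin m) ℝ) (ρ : Fin m → ℝ) :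
    Q (F + vecMulVec e ρ) = Q (F + vecMulVec (A⁻¹ *ᵥ ρ) e) := by
  set x := A⁻¹ *ᵥ ρ
  have hx : x ᵥ* A = ρ := by
    rw [← mulVec_transpose, hA.eq, mulVec_mulVec, mul_nonsing_inv _ hdet, one_mulVec]
  have heA : e ᵥ* A = e := by rw [← mulVec_transpose, hA.eq, he]
  have hK : (vecMulVec e x - vecMulVec x e)ᵀ = -(vecMulVec e x - vecMulVec x e) := by
    rw [transpose_sub, transpose_vecMulVec, transpose_vecMulVec, neg_sub]
  have hsplit : F + vecMulVec e ρ =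
      F + vecMulVec x e + (vecMulVec e x - vecMulVec x e) * A := by
    rw [Matrix.sub_mul, vecMulVec_mul, vecMulVec_mul, hx, heA]
    abel
  rw [hsplit, hQ.apply_add_mul hA hdet _ hK]

theorem DependsOnlyOnSymProj.pos_apply_vecMulVec (hQ : DependsOnlyOnSymProj A Q)
    (hA : A.IsSymm) (hdet : IsUnit A.det)
    (hQpos : ∀ S : Matrix (Fin m) (Fin m) ℝ, S.IsSymm → S * A⁻¹ ≠ 0 → 0 < Q (S * A⁻¹))
    {e : Fin m → ℝ} (he : A *ᵥ e = e) (he1 : e ⬝ᵥ e = 1) {v : Fin m → ℝ} (hv : v ≠ 0) :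
    0 < Q (vecMulVec v e) := by
  -- `w` is chosen so that `S A⁻¹ = w eᵀ + e (A⁻¹w)ᵀ` trades into `(w + A⁻²w) eᵀ = v eᵀ`.
  set w := (1 + A⁻¹ * A⁻¹)⁻¹ *ᵥ v
  have hw : w + A⁻¹ *ᵥ (A⁻¹ *ᵥ w) = v := by
    have h : (1 + A⁻¹ * A⁻¹) *ᵥ w = v := by
      rw [mulVec_mulVec, mul_nonsing_inv _ (isUnit_det_one_add_inv_mul_inv hA), one_mulVec]
    rwa [add_mulVec, one_mulVec, ← mulVec_mulVec] at h
  have hw0 : w ≠ 0 := by rintro h; simp [h] at hw; exact hv hw.symm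
  have heA : e ᵥ* A⁻¹ = e := by
    rw [← mulVec_transpose, hA.inv.eq, ← he, mulVec_mulVec, nonsing_inv_mul _ hdet, one_mulVec,
      he]
  set S := vecMulVec w e + vecMulVec e w
  have hS : S.IsSymm := by
    rw [IsSymm, transpose_add, transpose_vecMulVec, transpose_vecMulVec, add_comm]
  have hSA : S * A⁻¹ = vecMulVec w e + vecMulVec e (A⁻¹ *ᵥ w) := by
    rw [Matrix.add_mul, vecMulVec_mul, vecMulVec_mul, heA, ← mulVec_transpose, hA.inv.eq]
  have hSA0 : S * A⁻¹ ≠ 0 := fun h => vecMulVec_add_vecMulVec_ne_zero he1 hw0 <| by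
    show S = 0
    rw [← nonsing_inv_mul_cancel_right A S hdet, h, Matrix.zero_mul]
  have := hQpos S hS hSA0
  rwa [hSA, hQ.apply_add_vecMulVec hA hdet he, ← add_vecMulVec, hw] at this

end

local notation "e₃" => (Pi.single (2 : Fin 3) (1 : ℝ))

def augmentZeroₗ : Matrix (Fin 2) (Fin 2) ℝ →ₗ[ℝ] Matrix (Fin 3) (Fin 3) ℝ where
  toFun M := augment M 0
  map_add' M N := by ext i j; fin_cases i <;> fin_cases j <;> simp [augment]
  map_smul' r M := by ext i j; fin_cases i <;> fin_cases j <;> simp [augment]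

theorem augment_eq_augmentZeroₗ_add (M : Matrix (Fin 2) (Fin 2) ℝ) (v : Fin 3 → ℝ) :
    augment M v = augmentZeroₗ M + vecMulVec v e₃ := by
  ext i j; fin_cases i <;> fin_cases j <;> simp [augment, augmentZeroₗ, vecMulVec]

theorem blk_augment (M : Matrix (Fin 2) (Fin 2) ℝ) (v : Fin 3 → ℝ) : blk (augment M v) = M := by
  ext i j; fin_cases i <;> fin_cases j <;> simp [blk, augment]

theorem eq_augment_blk_add_vecMulVec (F : Matrix (Fin 3) (Fin 3) ℝ) :
    F = augment (blk F) (Fᵀ 2) + vecMulVec e₃ ![F 2 0, F 2 1, 0] := by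
  ext i j; fin_cases i <;> fin_cases j <;> simp [augment, blk, vecMulVec]

theorem DependsOnlyOnSymProj.exists_apply_augment_blk_eq {A : Matrix (Fin 3) (Fin 3) ℝ}
    {Q : Matrix (Fin 3) (Fin 3) ℝ → ℝ} (hQ : DependsOnlyOnSymProj A Q) (hA : A.IsSymm)
    (hdet : IsUnit A.det) (he : A *ᵥ e₃ = e₃) (F : Matrix (Fin 3) (Fin 3) ℝ) :
    ∃ v, Q F = Q (augment (blk F) v) := by
  refine ⟨Fᵀ 2 + A⁻¹ *ᵥ ![F 2 0, F 2 1, 0], ?_⟩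
  conv_lhs => rw [eq_augment_blk_add_vecMulVec F]
  rw [hQ.apply_add_vecMulVec hA hdet he, augment_eq_augmentZeroₗ_add,
    augment_eq_augmentZeroₗ_add, add_vecMulVec, add_assoc]

theorem Q2_minimum_attained_and_quadratic_general
    (A : Matrix (Fin 3) (Fin 3) ℝ) (hA_symm : A.IsSymm) (hA_pos : A.PosDef)
    (hA13 : A 0 2 = 0) (hA23 : A 1 2 = 0)
    (hA33 : A 2 2 = 1)
    (Q3 : Matrix (Fin 3) (Fin 3) ℝ → ℝ)
    (hQ3_quad : ∃ B : Matrix (Fin 3) (Fin 3) ℝ →ₗ[ℝ] Matrix (Fin 3) (Fin 3) ℝ →ₗ[ℝ] ℝ,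
      ∀ F, Q3 F = B F F)
    (hQ3_posdef : ∀ S : Matrix (Fin 3) (Fin 3) ℝ, S.IsSymm → S * A⁻¹ ≠ 0 →
      0 < Q3 (S * A⁻¹))
    (hQ3_proj : ∀ F G : Matrix (Fin 3) (Fin 3) ℝ,
      (∀ S : Matrix (Fin 3) (Fin 3) ℝ, S.IsSymm → frob (F - G) (S * A⁻¹) = 0) →
      Q3 F = Q3 G)
    (Q2 : Matrix (Fin 2) (Fin 2) ℝ → ℝ)
    (hQ2 : ∀ F₂, Q2 F₂ = sInf {q | ∃ F' : Matrix (Fin 3) (Fin 3) ℝ, blk F' = F₂ ∧ q = Q3 F'}) :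
    (∀ F₂, ∃ F' : Matrix (Fin 3) (Fin 3) ℝ, blk F' = F₂ ∧ Q3 F' = Q2 F₂) ∧
    (∃ B₂ : Matrix (Fin 2) (Fin 2) ℝ →ₗ[ℝ] Matrix (Fin 2) (Fin 2) ℝ →ₗ[ℝ] ℝ,
      ∀ F₂, Q2 F₂ = B₂ F₂ F₂) ∧
    (∃ c : Matrix (Fin 2) (Fin 2) ℝ →ₗ[ℝ] (Fin 3 → ℝ),
      ∀ F₂, Q2 F₂ = Q3 (augment F₂ (c F₂))) := by
  obtain ⟨B, hB⟩ := hQ3_quad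
  have hdet : IsUnit A.det := (isUnit_iff_isUnit_det A).mp hA_pos.isUnit
  have he : A *ᵥ e₃ = e₃ := by
    ext i; fin_cases i <;> simp [hA13, hA23, hA33]
  let N : (Fin 3 → ℝ) →ₗ[ℝ] Matrix (Fin 3) (Fin 3) ℝ := (vecMulVecBilin ℝ ℝ).flip e₃
  obtain ⟨c₀, hc₀⟩ := LinearMap.exists_linearMap_forall_apply_add_le B N fun v hv => by
    simpa [N, ← hB] using
      DependsOnlyOnSymProj.pos_apply_vecMulVec hQ3_proj hA_symm hdet hQ3_posdef he (by simp) hv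
  let c := c₀ ∘ₗ augmentZeroₗ
  have hleast (F₂ : Matrix (Fin 2) (Fin 2) ℝ) :
      IsLeast {q | ∃ F' : Matrix (Fin 3) (Fin 3) ℝ, blk F' = F₂ ∧ q = Q3 F'}
        (Q3 (augment F₂ (c F₂))) := by
    refine ⟨⟨_, blk_augment _ _, rfl⟩, ?_⟩
    rintro q ⟨F', rfl, rfl⟩
    obtain ⟨v, hv⟩ :=
      DependsOnlyOnSymProj.exists_apply_augment_blk_eq hQ3_proj hA_symm hdet he F'
    rw [hv, augment_eq_augmentZeroₗ_add, augment_eq_augmentZeroₗ_add, hB, hB]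
    exact hc₀ _ v
  have hQ2_eq (F₂ : Matrix (Fin 2) (Fin 2) ℝ) : Q2 F₂ = Q3 (augment F₂ (c F₂)) :=
    (hQ2 F₂).trans (hleast F₂).csInf_eq
  refine ⟨fun F₂ => ⟨_, blk_augment _ _, (hQ2_eq F₂).symm⟩, ?_, ⟨c, hQ2_eq⟩⟩
  let φ := augmentZeroₗ + N ∘ₗ c
  refine ⟨B.compl₁₂ φ φ, fun F₂ => ?_⟩
  rw [hQ2_eq, augment_eq_augmentZeroₗ_add, hB]
  rfl

/-- for `Q₃` a nonnegative quadratic form on `ℝ^{3×3}`, positive definite on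
`sym·A⁻¹` and depending only on the Frobenius-orthogonal projection onto `sym·A⁻¹`
(`A = diag(A₂,1)` symmetric positive definite), the minimum defining
`Q₂(F₂) = min {Q₃(F̃) : F̃ has principal block F₂}` is attained, `Q₂` is a quadratic form
on `ℝ^{2×2}`, and there is a linear map `c : ℝ^{2×2} → ℝ³` with
`Q₂(F₂) = Q₃` of the matrix with block `F₂`, third column `c(F₂)` and zeros at `(3,1),(3,2)`. -/
theorem Q2_minimum_attained_and_quadratic
    (A : Matrix (Fin 3) (Fin 3) ℝ) (hA_symm : A.IsSymm) (hA_pos : A.PosDef)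
    (hA13 : A 0 2 = 0) (hA23 : A 1 2 = 0) (hA31 : A 2 0 = 0) (hA32 : A 2 1 = 0)
    (hA33 : A 2 2 = 1)
    (Q3 : Matrix (Fin 3) (Fin 3) ℝ → ℝ)
    (hQ3_quad : ∃ B : Matrix (Fin 3) (Fin 3) ℝ →ₗ[ℝ] Matrix (Fin 3) (Fin 3) ℝ →ₗ[ℝ] ℝ,
      ∀ F, Q3 F = B F F)
    (hQ3_nonneg : ∀ F, 0 ≤ Q3 F)
    (hQ3_posdef : ∀ S : Matrix (Fin 3) (Fin 3) ℝ, S.IsSymm → S * A⁻¹ ≠ 0 →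
      0 < Q3 (S * A⁻¹))
    (hQ3_proj : ∀ F G : Matrix (Fin 3) (Fin 3) ℝ,
      (∀ S : Matrix (Fin 3) (Fin 3) ℝ, S.IsSymm → frob (F - G) (S * A⁻¹) = 0) →
      Q3 F = Q3 G)
    (Q2 : Matrix (Fin 2) (Fin 2) ℝ → ℝ)
    (hQ2 : ∀ F₂, Q2 F₂ = sInf {q | ∃ F' : Matrix (Fin 3) (Fin 3) ℝ, blk F' = F₂ ∧ q = Q3 F'}) :
    (∀ F₂, ∃ F' : Matrix (Fin 3) (Fin 3) ℝ, blk F' = F₂ ∧ Q3 F' = Q2 F₂) ∧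
    (∃ B₂ : Matrix (Fin 2) (Fin 2) ℝ →ₗ[ℝ] Matrix (Fin 2) (Fin 2) ℝ →ₗ[ℝ] ℝ,
      ∀ F₂, Q2 F₂ = B₂ F₂ F₂) ∧
    (∃ c : Matrix (Fin 2) (Fin 2) ℝ →ₗ[ℝ] (Fin 3 → ℝ),
      ∀ F₂, Q2 F₂ = Q3 (augment F₂ (c F₂))) :=
  Q2_minimum_attained_and_quadratic_general A hA_symm hA_pos hA13 hA23 hA33 Q3 hQ3_quad hQ3_posdef
    hQ3_proj Q2 hQ2
end
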